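/- Let F be a finite field with |F| = q ≥ 2. Under the uniform distribution on tuples (a,b,c,d,k13,k14,k47,k78,k25,k57) ∈ F^10, the probability that the butterfly decoding matrix at sink t1, namely F_{t1} = [[a·k13, (a·k14·k47 + c·k25·k57)·k78], [b·k13, (b·k14·k47 + d·k25·k57)·k78]], is invertible equals (q+1)(q-1)^6/q^7. Equivalently, the number of such tuples in F^10 for which F_{t1} is invertible equals q³(q+1)(q-1)^6, so the failure probability of sink t1 under random linear network coding on the butterfly network is P_e(t1) = 1 − (q+1)(q-1)^6/q^7. -/
import Mathlib

/- The decoding matrix at sink `t₁` of the butterfly network, with source kernel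
`K_s = [[a,c],[b,d]]` and local encoding coefficients `k13, k14, k47, k78, k25, k57`. -/
def Ft1 {F : Type*} [Field F] (a b c d k13 k14 k47 k78 k25 k57 : F) :
    Matrix (Fin 2) (Fin 2) F :=
  !![a * k13, (a * k14 * k47 + c * k25 * k57) * k78;
     b * k13, (b * k14 * k47 + d * k25 * k57) * k78]

/-- Units of a monoid are equivalent to the subtype of elements that are units. -/
noncomputable def unitsEquivIsUnitSubtype (M : Type*) [Monoid M] : Mˣ ≃ {x : M // IsUnit x} :=
  Equiv.ofBijective (fun u => ⟨u, u.isUnit⟩)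
    ⟨fun a b h => Units.ext (congrArg Subtype.val h),
     fun x => ⟨x.2.unit, Subtype.ext x.2.unit_spec⟩⟩

/-- Splitting a 10-tuple into a 2×2 matrix and six scalars. -/
def splitEquiv (F : Type*) [Field F] :
    (Fin 10 → F) ≃ (Matrix (Fin 2) (Fin 2) F) × F × F × F × F × F × F where
  toFun v := (!![v 0, v 2; v 1, v 3], v 4, v 5, v 6, v 7, v 8, v 9)
  invFun p := ![p.1 0 0, p.1 1 0, p.1 0 1, p.1 1 1,
    p.2.1, p.2.2.1, p.2.2.2.1, p.2.2.2.2.1, p.2.2.2.2.2.1, p.2.2.2.2.2.2]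
  left_inv v := by
    funext i
    fin_cases i <;> rfl
  right_inv p := by
    obtain ⟨m, k1, k2, k3, k4, k5, k6⟩ := p
    simp only
    refine Prod.ext ?_ rfl
    simp only [Matrix.cons_val_zero, Matrix.cons_val_one, Matrix.head_cons,
      Matrix.cons_val_two, Matrix.tail_cons, Matrix.cons_val_three]
    exact (Matrix.eta_fin_two m).symm

open Classical in
theorem butterfly_sink_t1_failure_probability
    (F : Type*) [Field F] [Fintype F] (q : ℕ) (hq : Fintype.card F = q) (hq2 : 2 ≤ q) :
    ((Finset.univ.filter fun v : Fin 10 → F =>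
        IsUnit (Ft1 (v 0) (v 1) (v 2) (v 3) (v 4) (v 5) (v 6) (v 7) (v 8) (v 9))).card : ℝ) /
        (q : ℝ) ^ 10 = ((q : ℝ) + 1) * ((q : ℝ) - 1) ^ 6 / (q : ℝ) ^ 7 ∧
    (Finset.univ.filter fun v : Fin 10 → F =>
        IsUnit (Ft1 (v 0) (v 1) (v 2) (v 3) (v 4) (v 5) (v 6) (v 7) (v 8) (v 9))).card =
      q ^ 3 * (q + 1) * (q - 1) ^ 6 ∧
    ((Finset.univ.filter fun v : Fin 10 → F =>
        ¬ IsUnit (Ft1 (v 0) (v 1) (v 2) (v 3) (v 4) (v 5) (v 6) (v 7) (v 8) (v 9))).card : ℝ) /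
        (q : ℝ) ^ 10 = 1 - ((q : ℝ) + 1) * ((q : ℝ) - 1) ^ 6 / (q : ℝ) ^ 7 := by
  classical
  -- Step 1: characterize invertibility of Ft1
  have hdet : ∀ a b c d k13 k14 k47 k78 k25 k57 : F,
      IsUnit (Ft1 a b c d k13 k14 k47 k78 k25 k57) ↔
      (IsUnit (!![a, c; b, d] : Matrix (Fin 2) (Fin 2) F) ∧
        (k13 ≠ 0 ∧ True ∧ True ∧ k78 ≠ 0 ∧ k25 ≠ 0 ∧ k57 ≠ 0)) := by
    intro a b c d k13 k14 k47 k78 k25 k57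
    rw [Matrix.isUnit_iff_isUnit_det, Matrix.isUnit_iff_isUnit_det,
      isUnit_iff_ne_zero, isUnit_iff_ne_zero, Ft1, Matrix.det_fin_two_of,
      Matrix.det_fin_two_of]
    have h : a * k13 * ((b * k14 * k47 + d * k25 * k57) * k78) -
        (a * k14 * k47 + c * k25 * k57) * k78 * (b * k13) =
        (a * d - c * b) * (k13 * (k78 * (k25 * k57))) := by ring
    rw [h, mul_ne_zero_iff, mul_ne_zero_iff, mul_ne_zero_iff, mul_ne_zero_iff]
    tauto
  -- Step 2: count
  have hq0 : (q : ℝ) ≠ 0 := Nat.cast_ne_zero.mpr (by omega)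
  have hcast : ((q ^ 3 * (q + 1) * (q - 1) ^ 6 : ℕ) : ℝ) =
      (q : ℝ) ^ 3 * ((q : ℝ) + 1) * ((q : ℝ) - 1) ^ 6 := by
    have hq1 : 1 ≤ q := by omega
    have h1 : ((q - 1 : ℕ) : ℝ) = (q : ℝ) - 1 := by
      rw [Nat.cast_sub hq1]; simp
    push_cast [h1]
    ring
  have hcard : (Finset.univ.filter fun v : Fin 10 → F =>
      IsUnit (Ft1 (v 0) (v 1) (v 2) (v 3) (v 4) (v 5) (v 6) (v 7) (v 8) (v 9))).card =
      q ^ 3 * (q + 1) * (q - 1) ^ 6 := by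
    rw [Finset.card_equiv (splitEquiv F) (t :=
        (Finset.univ.filter fun m : Matrix (Fin 2) (Fin 2) F => IsUnit m) ×ˢ
        ((Finset.univ.filter fun x : F => x ≠ 0) ×ˢ (Finset.univ ×ˢ (Finset.univ ×ˢ
          ((Finset.univ.filter fun x : F => x ≠ 0) ×ˢ
           ((Finset.univ.filter fun x : F => x ≠ 0) ×ˢ
            (Finset.univ.filter fun x : F => x ≠ 0)))))))]
    · have hne : (Finset.univ.filter fun x : F => x ≠ 0).card = q - 1 := by
        rw [Finset.filter_ne', Finset.card_erase_of_mem (Finset.mem_univ _),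
          Finset.card_univ, hq]
      have hGL : (Finset.univ.filter fun m : Matrix (Fin 2) (Fin 2) F => IsUnit m).card =
          (q ^ 2 - 1) * (q ^ 2 - q) := by
        rw [← Fintype.card_subtype,
          ← Fintype.card_congr (unitsEquivIsUnitSubtype (Matrix (Fin 2) (Fin 2) F)),
          ← Nat.card_eq_fintype_card]
        have := Matrix.card_GL_field (𝔽 := F) 2
        rw [show (GL (Fin 2) F) = (Matrix (Fin 2) (Fin 2) F)ˣ from rfl] at this
        rw [this, Fin.prod_univ_two, hq]
        simp [pow_one]
      simp only [Finset.card_product, hne, hGL, Finset.card_univ, hq]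
      obtain ⟨k, rfl⟩ : ∃ k, q = k + 2 := ⟨q - 2, by omega⟩
      have h1 : (k + 2) ^ 2 - 1 = k ^ 2 + 4 * k + 3 := by
        have : (k + 2) ^ 2 = k ^ 2 + 4 * k + 4 := by ring
        omega
      have h2 : (k + 2) ^ 2 - (k + 2) = k ^ 2 + 3 * k + 2 := by
        have : (k + 2) ^ 2 = k ^ 2 + 4 * k + 4 := by ring
        omega
      have h3 : k + 2 - 1 = k + 1 := by omega
      rw [h1, h2, h3]
      ring
    · intro v
      simp only [Finset.mem_filter, Finset.mem_univ, true_and, splitEquiv,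
        Equiv.coe_fn_mk, Finset.mem_product]
      rw [hdet (v 0) (v 1) (v 2) (v 3) (v 4) (v 5) (v 6) (v 7) (v 8) (v 9)]
      tauto
  refine ⟨?_, hcard, ?_⟩
  · rw [hcard, hcast]
    field_simp
  · have htot : (Finset.univ.filter fun v : Fin 10 → F =>
        IsUnit (Ft1 (v 0) (v 1) (v 2) (v 3) (v 4) (v 5) (v 6) (v 7) (v 8) (v 9))).card +
        (Finset.univ.filter fun v : Fin 10 → F =>
        ¬ IsUnit (Ft1 (v 0) (v 1) (v 2) (v 3) (v 4) (v 5) (v 6) (v 7) (v 8) (v 9))).card =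
        q ^ 10 := by
      rw [Finset.card_filter_add_card_filter_not, Finset.card_univ,
        Fintype.card_fun, hq, Fintype.card_fin]
    have hle : ((Finset.univ.filter fun v : Fin 10 → F =>
        ¬ IsUnit (Ft1 (v 0) (v 1) (v 2) (v 3) (v 4) (v 5) (v 6) (v 7) (v 8) (v 9))).card : ℝ) =
        (q : ℝ) ^ 10 - (q : ℝ) ^ 3 * ((q : ℝ) + 1) * ((q : ℝ) - 1) ^ 6 := by
      have := congrArg (fun n : ℕ => (n : ℝ)) htot
      push_cast at this
      rw [hcard, hcast] at this
      linarith
    rw [hle]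
    field_simp
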